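/- arXiv:1809.08128 — 3 statements merged into one kernel-verified Lean document; each statement's English description precedes it below -/
import Mathlib

section
/- Identify {1,...,mn} with {1,...,m}×{1,...,n} and let the wreath product S_m ≀ S_n act by (σ_1,...,σ_n; π)·(i,j) = (σ_{π(j)}(i), π(j)). Two tuples of pairs ((i_1,j_1),...,(i_r,j_r)) and ((i'_1,j'_1),...,(i'_r,j'_r)) lie in the same S_m ≀ S_n-orbit of the diagonal action on r-tuples if and only if they have the same value-type, i.e. for all k,l: j_k = j_l ⟺ j'_k = j'_l, and (j_k = j_l ∧ i_k = i_l) ⟺ (j'_k = j'_l ∧ i'_k = i'_l). -/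
/-!
Statement 5: identify `{1,…,mn}` with `{1,…,m} × {1,…,n}` and let the wreath product
`S_m ≀ S_n` act by `(σ_1,…,σ_n; π)·(i,j) = (σ_{π(j)}(i), π(j))`.  Two `r`-tuples of pairs
lie in the same `S_m ≀ S_n`-orbit of the diagonal action if and only if they have the same
value-type: for all `k, l`, `j_k = j_l ⟺ j'_k = j'_l` and
`(j_k = j_l ∧ i_k = i_l) ⟺ (j'_k = j'_l ∧ i'_k = i'_l)`.
-/

open Classical in
lemma exists_perm_extend {α : Type*} [Fintype α] (f : α → α) (s : Set α)
    (hf : Set.InjOn f s) : ∃ g : Equiv.Perm α, ∀ x ∈ s, g x = f x := by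
  classical
  obtain ⟨e1, he1⟩ : ∃ e : s ≃ (f '' s : Set α), ∀ x : s, (e x : α) = f x :=
    ⟨Equiv.Set.imageOfInjOn f s hf, fun x => rfl⟩
  have hcard : Fintype.card (↥(sᶜ)) = Fintype.card (↥((f '' s)ᶜ)) := by
    have h1 : Fintype.card s = Fintype.card (f '' s : Set α) := Fintype.card_congr e1
    rw [Fintype.card_compl_set, Fintype.card_compl_set, h1]
  have e2 : (↥(sᶜ)) ≃ (↥((f '' s)ᶜ)) := Fintype.equivOfCardEq hcard
  refine ⟨(Equiv.Set.sumCompl s).symm.trans ((e1.sumCongr e2).trans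
      (Equiv.Set.sumCompl (f '' s))), fun x hx => ?_⟩
  simp [Equiv.Set.sumCompl_symm_apply_of_mem hx, he1]

theorem wreath_same_orbit_iff_value_type (m n r : ℕ) (v w : Fin r → Fin m × Fin n) :
    (∃ (σ : Fin n → Equiv.Perm (Fin m)) (π : Equiv.Perm (Fin n)),
        ∀ k : Fin r, w k = (σ (π (v k).2) (v k).1, π (v k).2)) ↔
      (∀ k l : Fin r,
        (((v k).2 = (v l).2) ↔ ((w k).2 = (w l).2)) ∧
        ((((v k).2 = (v l).2) ∧ (v k).1 = (v l).1) ↔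
          (((w k).2 = (w l).2) ∧ (w k).1 = (w l).1))) := by
  classical
  constructor
  · rintro ⟨σ, π, h⟩ k l
    have hk := h k; have hl := h l
    have hw2k : (w k).2 = π (v k).2 := by rw [hk]
    have hw2l : (w l).2 = π (v l).2 := by rw [hl]
    have hw1k : (w k).1 = σ (π (v k).2) (v k).1 := by rw [hk]
    have hw1l : (w l).1 = σ (π (v l).2) (v l).1 := by rw [hl]
    constructor
    · rw [hw2k, hw2l]; exact ⟨fun h => by rw [h], fun h => π.injective h⟩
    · constructor
      · rintro ⟨h2, h1⟩
        rw [hw2k, hw2l, h2, hw1k, hw1l, h2, h1]; exact ⟨rfl, rfl⟩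
      · rintro ⟨h2, h1⟩
        have hv2 : (v k).2 = (v l).2 := π.injective (by rw [← hw2k, ← hw2l, h2])
        refine ⟨hv2, (σ (π (v k).2)).injective ?_⟩
        rw [← hw1k, hv2, ← hw1l, h1]
    
  · intro H
    -- column permutation
    set S : Set (Fin n) := {j | ∃ k, (v k).2 = j} with hS
    set F : Fin n → Fin n := fun j =>
      if h : ∃ k, (v k).2 = j then (w h.choose).2 else j with hF
    have hFval : ∀ k : Fin r, F (v k).2 = (w k).2 := by
      intro k
      have h : ∃ k', (v k').2 = (v k).2 := ⟨k, rfl⟩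
      rw [hF]; simp only [dif_pos h]
      exact ((H h.choose k).1).1 h.choose_spec
    have hFinj : Set.InjOn F S := by
      rintro j1 ⟨k1, hk1⟩ j2 ⟨k2, hk2⟩ hEq
      subst hk1; subst hk2
      rw [hFval, hFval] at hEq
      exact ((H k1 k2).1).2 hEq
    obtain ⟨π, hπ⟩ := exists_perm_extend F S hFinj
    have hπval : ∀ k : Fin r, π (v k).2 = (w k).2 := fun k =>
      (hπ _ ⟨k, rfl⟩).trans (hFval k)
    -- row permutations, one per target column
    have hσ : ∀ c : Fin n, ∃ σc : Equiv.Perm (Fin m),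
        ∀ k : Fin r, (w k).2 = c → σc (v k).1 = (w k).1 := by
      intro c
      set T : Set (Fin m) := {i | ∃ k, (w k).2 = c ∧ (v k).1 = i} with hT
      set G : Fin m → Fin m := fun i =>
        if h : ∃ k, (w k).2 = c ∧ (v k).1 = i then (w h.choose).1 else i with hG
      have hGval : ∀ k : Fin r, (w k).2 = c → G (v k).1 = (w k).1 := by
        intro k hk
        have h : ∃ k', (w k').2 = c ∧ (v k').1 = (v k).1 := ⟨k, hk, rfl⟩
        rw [hG]; simp only [dif_pos h]
        obtain ⟨hc', hi'⟩ := h.choose_spec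
        have hcol : (w h.choose).2 = (w k).2 := hc'.trans hk.symm
        have hvcol : (v h.choose).2 = (v k).2 := ((H h.choose k).1).2 hcol
        exact (((H h.choose k).2).1 ⟨hvcol, hi'⟩).2
      have hGinj : Set.InjOn G T := by
        rintro i1 ⟨k1, hc1, hi1⟩ i2 ⟨k2, hc2, hi2⟩ hEq
        subst hi1; subst hi2
        rw [hGval k1 hc1, hGval k2 hc2] at hEq
        exact (((H k1 k2).2).2 ⟨hc1.trans hc2.symm, hEq⟩).2
      obtain ⟨σc, hσc⟩ := exists_perm_extend G T hGinj
      exact ⟨σc, fun k hk => (hσc _ ⟨k, hk, rfl⟩).trans (hGval k hk)⟩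
    choose σ hσ using hσ
    refine ⟨σ, π, fun k => ?_⟩
    have h2 : π (v k).2 = (w k).2 := hπval k
    have h1 : σ (π (v k).2) (v k).1 = (w k).1 := by
      rw [h2]; exact hσ _ k rfl
    exact Prod.ext h1.symm h2.symm
end

section
/- The number of S_m ≀ S_n-orbits on r-tuples of elements of {1,...,m}×{1,...,n} (under the wreath product action described) equals the number of pairs (Λ, Λ') of set-partitions of {1,...,r} with Λ refining Λ', Λ' having at most n blocks, and each block of Λ' containing at most m blocks of Λ. -/
/-!
Statement 6: the number of orbits of the wreath product `S_m ≀ S_n` on `r`-tuples of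
elements of `{1,…,m} × {1,…,n}` (acting by `(σ_1,…,σ_n; π)·(i,j) = (σ_{π(j)}(i), π(j))`,
diagonally on tuples) equals the number of pairs `(Λ, Λ')` of set-partitions of `{1,…,r}`
with `Λ` refining `Λ'`, `Λ'` having at most `n` blocks, and each block of `Λ'` containing
at most `m` blocks of `Λ`.
-/

namespace FoulkesWreath

/-- The permutation action of `S_n` on `n`-tuples of elements of `S_m`, permuting the
coordinates. -/
def phi (m n : ℕ) : Equiv.Perm (Fin n) →* MulAut (Fin n → Equiv.Perm (Fin m)) where
  toFun π := MulEquiv.mk (Equiv.arrowCongr π (Equiv.refl (Equiv.Perm (Fin m))))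
    (fun _ _ => rfl)
  map_one' := by
    ext f x
    simp [Equiv.arrowCongr, Equiv.Perm.one_symm]
  map_mul' π₁ π₂ := by
    ext f x
    simp [Equiv.arrowCongr, Equiv.Perm.mul_def, Equiv.symm_trans_apply]

/-- The wreath product `S_m ≀ S_n` as a semidirect product `(S_m)^n ⋊ S_n`. -/
abbrev Wreath (m n : ℕ) : Type :=
  (Fin n → Equiv.Perm (Fin m)) ⋊[phi m n] Equiv.Perm (Fin n)

instance (m n : ℕ) : SMul (Wreath m n) (Fin m × Fin n) :=
  ⟨fun g x => (SemidirectProduct.left g (SemidirectProduct.right g x.2) x.1,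
    SemidirectProduct.right g x.2)⟩

lemma smul_def (m n : ℕ) (g : Wreath m n) (x : Fin m × Fin n) :
    g • x = (SemidirectProduct.left g (SemidirectProduct.right g x.2) x.1,
      SemidirectProduct.right g x.2) := rfl

/-- The action `(σ_1,…,σ_n; π)·(i,j) = (σ_{π(j)}(i), π(j))` of the wreath product on
`{1,…,m} × {1,…,n}`. -/
instance wreathAction (m n : ℕ) : MulAction (Wreath m n) (Fin m × Fin n) where
  one_smul x := by
    simp [smul_def]
  mul_smul g h x := by
    simp [smul_def, SemidirectProduct.mul_left, SemidirectProduct.mul_right, phi,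
      Equiv.arrowCongr, Equiv.Perm.mul_apply, MulAut.mul_apply]

/-- `Λ` refines `Γ`: `a ∼_Λ b` implies `a ∼_Γ b` for all `a, b`. -/
def Refines {r : ℕ} (P Q : Finpartition (⊤ : Finset (Fin r))) : Prop :=
  ∀ a b : Fin r, (∃ t ∈ P.parts, a ∈ t ∧ b ∈ t) → ∃ t ∈ Q.parts, a ∈ t ∧ b ∈ t


section Helpers
open Finset
variable {r : ℕ} {β : Type*} [DecidableEq β]


def kerS (h : Fin r → β) : Setoid (Fin r) :=
  ⟨fun a b => h a = h b, ⟨fun _ => rfl, Eq.symm, Eq.trans⟩⟩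

instance (h : Fin r → β) : DecidableRel (kerS h).r := fun a b =>
  inferInstanceAs (Decidable (h a = h b))

def kerPart (h : Fin r → β) : Finpartition (⊤ : Finset (Fin r)) :=
  Finpartition.ofSetoid (kerS h)

lemma mem_part_kerPart (h : Fin r → β) (a b : Fin r) :
    b ∈ (kerPart h).part a ↔ h a = h b :=
  Finpartition.mem_part_ofSetoid_iff_rel

lemma mem_top' (a : Fin r) : a ∈ (⊤ : Finset (Fin r)) := mem_univ a

lemma finpartition_eq_of_part {P Q : Finpartition (⊤ : Finset (Fin r))}
    (h : ∀ a b : Fin r, b ∈ P.part a ↔ b ∈ Q.part a) : P = Q := by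
  have hpart : ∀ a, P.part a = Q.part a := fun a => Finset.ext fun b => h a b
  ext c
  constructor
  · intro hc
    obtain ⟨a, _, ha⟩ := P.part_surjOn hc
    exact ha ▸ hpart a ▸ Q.part_mem.2 (mem_top' a)
  · intro hc
    obtain ⟨a, _, ha⟩ := Q.part_surjOn hc
    exact ha ▸ (hpart a).symm ▸ P.part_mem.2 (mem_top' a)

lemma parts_eq_image_part (P : Finpartition (⊤ : Finset (Fin r))) :
    P.parts = (⊤ : Finset (Fin r)).image P.part := by
  ext c
  simp only [mem_image]
  constructor
  · intro hc
    obtain ⟨a, _, ha⟩ := P.part_surjOn hc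
    exact ⟨a, mem_top' a, ha⟩
  · rintro ⟨a, _, rfl⟩
    exact P.part_mem.2 (mem_top' a)

lemma card_image_le_of_factor {ι γ δ : Type*} [DecidableEq γ] [DecidableEq δ]
    (s : Finset ι) (u : ι → γ) (v : ι → δ)
    (h : ∀ a ∈ s, ∀ b ∈ s, v a = v b → u a = u b) :
    (s.image u).card ≤ (s.image v).card := by
  classical
  rcases s.eq_empty_or_nonempty with rfl | ⟨a0, ha0⟩
  · simp
  haveI : Nonempty ι := ⟨a0⟩
  have himg : s.image u = (s.image v).image (fun x => u (Function.invFunOn v ↑s x)) := by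
    ext y
    simp only [mem_image, exists_exists_and_eq_and]
    constructor
    · rintro ⟨a, ha, rfl⟩
      refine ⟨a, ha, ?_⟩
      have h1 : Function.invFunOn v ↑s (v a) ∈ (s : Set ι) :=
        Function.invFunOn_mem ⟨a, ha, rfl⟩
      have h2 : v (Function.invFunOn v ↑s (v a)) = v a :=
        Function.invFunOn_eq ⟨a, ha, rfl⟩
      exact h _ h1 a ha h2
    · rintro ⟨a, ha, rfl⟩
      have h1 : Function.invFunOn v ↑s (v a) ∈ (s : Set ι) :=
        Function.invFunOn_mem ⟨a, ha, rfl⟩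
      exact ⟨_, h1, rfl⟩
  rw [himg]
  exact card_image_le

noncomputable def idxIn {δ : Type*} [DecidableEq δ] (S : Finset δ) (x : δ) : ℕ :=
  S.toList.idxOf x

lemma idxIn_lt {δ : Type*} [DecidableEq δ] {S : Finset δ} {x : δ} (hx : x ∈ S) :
    idxIn S x < S.card := by
  rw [idxIn, ← Finset.length_toList]
  exact List.idxOf_lt_length_iff.2 (Finset.mem_toList.2 hx)

lemma idxIn_inj {δ : Type*} [DecidableEq δ] {S : Finset δ} {x y : δ}
    (hx : x ∈ S) (hy : y ∈ S) : idxIn S x = idxIn S y ↔ x = y :=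
  List.idxOf_inj (Finset.mem_toList.2 hx)

lemma exists_perm {ι α : Type*} [Fintype α] [DecidableEq α] (u v : ι → α)
    (H : ∀ a b, u a = u b ↔ v a = v b) :
    ∃ π : Equiv.Perm α, ∀ a, π (u a) = v a := by
  classical
  have key : ∀ {x : α} (hx : x ∈ Set.range u), u (Classical.choose hx) = x :=
    fun hx => Classical.choose_spec hx
  have key' : ∀ {x : α} (hx : x ∈ Set.range v), v (Classical.choose hx) = x :=
    fun hx => Classical.choose_spec hx
  let e : {x // x ∈ Set.range u} ≃ {x // x ∈ Set.range v} :=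
    { toFun := fun x => ⟨v (Classical.choose x.2), Set.mem_range_self _⟩
      invFun := fun x => ⟨u (Classical.choose x.2), Set.mem_range_self _⟩
      left_inv := by
        rintro ⟨x, hx⟩
        apply Subtype.ext
        show u (Classical.choose (Set.mem_range_self _)) = x
        exact ((H _ _).2 (key' (Set.mem_range_self _))).trans (key hx)
      right_inv := by
        rintro ⟨x, hx⟩
        apply Subtype.ext
        show v (Classical.choose (Set.mem_range_self _)) = x
        exact ((H _ _).1 (key (Set.mem_range_self _))).trans (key' hx) }
  refine ⟨e.extendSubtype, fun a => ?_⟩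
  rw [Equiv.extendSubtype_apply_of_mem e (u a) (Set.mem_range_self a)]
  show v (Classical.choose (Set.mem_range_self a : u a ∈ Set.range u)) = v a
  exact (H _ _).1 (key (Set.mem_range_self a))

lemma part_kerPart_eq_iff (h : Fin r → β) (a b : Fin r) :
    (kerPart h).part a = (kerPart h).part b ↔ h a = h b := by
  constructor
  · intro he
    exact (mem_part_kerPart h a b).1 (he ▸ Finpartition.mem_part _ (mem_top' b))
  · intro he
    exact (Finpartition.part_eq_of_mem _ ((Finpartition.part_mem _).2 (mem_top' a))
      ((mem_part_kerPart h a b).2 he)).symm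

lemma kerPart_eq_kerPart {γ : Type*} [DecidableEq γ] {h : Fin r → β} {h' : Fin r → γ} :
    kerPart h = kerPart h' ↔ ∀ a b, h a = h b ↔ h' a = h' b := by
  constructor
  · intro he a b
    rw [← mem_part_kerPart h a b, ← mem_part_kerPart h' a b, he]
  · intro H
    refine finpartition_eq_of_part fun a b => ?_
    rw [mem_part_kerPart, mem_part_kerPart, H]

lemma card_parts_kerPart_le [Fintype β] (h : Fin r → β) :
    (kerPart h).parts.card ≤ Fintype.card β := by
  rw [parts_eq_image_part]
  calc ((⊤ : Finset (Fin r)).image (kerPart h).part).card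
      ≤ ((⊤ : Finset (Fin r)).image h).card :=
        card_image_le_of_factor _ _ _ (fun a _ b _ hab => (part_kerPart_eq_iff h a b).2 hab)
    _ ≤ Fintype.card β := Finset.card_le_univ _

section
variable {m n : ℕ} (f : Fin r → Fin m × Fin n)

lemma refines_kerPart : ∀ a b : Fin r,
    (∃ t ∈ (kerPart f).parts, a ∈ t ∧ b ∈ t) →
    ∃ t ∈ (kerPart (fun a => (f a).2)).parts, a ∈ t ∧ b ∈ t := by
  rintro a b ⟨t, ht, hat, hbt⟩
  have h1 : (kerPart f).part a = t := Finpartition.part_eq_of_mem _ ht hat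
  have h2 : f a = f b := (mem_part_kerPart f a b).1 (h1 ▸ hbt)
  exact ⟨(kerPart (fun a => (f a).2)).part a, (Finpartition.part_mem _).2 (mem_top' a),
    Finpartition.mem_part _ (mem_top' a), (mem_part_kerPart _ a b).2 (by rw [h2])⟩

lemma filter_parts_eq_image {c : Finset (Fin r)}
    (hc : c ∈ (kerPart (fun a => (f a).2)).parts) :
    (kerPart f).parts.filter (fun t => t ⊆ c) = c.image (kerPart f).part := by
  ext t
  simp only [mem_filter, mem_image]
  constructor
  · rintro ⟨ht, htc⟩
    obtain ⟨a, hat⟩ := (kerPart f).nonempty_of_mem_parts ht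
    exact ⟨a, htc hat, Finpartition.part_eq_of_mem _ ht hat⟩
  · rintro ⟨a, hac, rfl⟩
    refine ⟨(Finpartition.part_mem _).2 (mem_top' a), fun b hb => ?_⟩
    have h2 : f a = f b := (mem_part_kerPart f a b).1 hb
    have h3 : (kerPart (fun a => (f a).2)).part a = c :=
      Finpartition.part_eq_of_mem _ hc hac
    have h4 : b ∈ (kerPart (fun a => (f a).2)).part a :=
      (mem_part_kerPart _ a b).2 (by rw [h2])
    exact h3 ▸ h4

lemma card_filter_parts_le {c : Finset (Fin r)}
    (hc : c ∈ (kerPart (fun a => (f a).2)).parts) :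
    ((kerPart f).parts.filter (fun t => t ⊆ c)).card ≤ m := by
  rw [filter_parts_eq_image f hc]
  calc (c.image (kerPart f).part).card
      ≤ (c.image (fun a => (f a).1)).card := by
        refine card_image_le_of_factor _ _ _ (fun a ha b hb hab => ?_)
        have h2a : (kerPart (fun a => (f a).2)).part a = c :=
          Finpartition.part_eq_of_mem _ hc ha
        have h2b : (kerPart (fun a => (f a).2)).part b = c :=
          Finpartition.part_eq_of_mem _ hc hb
        have hsnd : (f a).2 = (f b).2 :=
          (part_kerPart_eq_iff _ a b).1 (h2a.trans h2b.symm)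
        exact (part_kerPart_eq_iff f a b).2 (Prod.ext hab hsnd)
    _ ≤ m := (Finset.card_le_univ _).trans (by simp)
end

lemma mem_part_iff_part_eq (P : Finpartition (⊤ : Finset (Fin r))) (a b : Fin r) :
    b ∈ P.part a ↔ P.part a = P.part b := by
  constructor
  · intro hb
    exact (P.part_eq_of_mem (P.part_mem.2 (mem_top' a)) hb).symm
  · intro he
    rw [he]
    exact P.mem_part (mem_top' b)

section
variable {m n : ℕ}

lemma exists_realization (Λ Λ' : Finpartition (⊤ : Finset (Fin r)))
    (hre : ∀ a b : Fin r, (∃ t ∈ Λ.parts, a ∈ t ∧ b ∈ t) → ∃ t ∈ Λ'.parts, a ∈ t ∧ b ∈ t)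
    (hn : Λ'.parts.card ≤ n)
    (hm : ∀ c ∈ Λ'.parts, (Λ.parts.filter (fun t => t ⊆ c)).card ≤ m) :
    ∃ f : Fin r → Fin m × Fin n,
      kerPart f = Λ ∧ kerPart (fun a => (f a).2) = Λ' := by
  classical
  have hsub : ∀ a, Λ.part a ⊆ Λ'.part a := by
    intro a b hb
    obtain ⟨u, hu, hau, hbu⟩ := hre a b
      ⟨Λ.part a, Λ.part_mem.2 (mem_top' a), Λ.mem_part (mem_top' a), hb⟩
    rw [Λ'.part_eq_of_mem hu hau]
    exact hbu
  have hΛ' : ∀ a b : Fin r, Λ.part a = Λ.part b → Λ'.part a = Λ'.part b := by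
    intro a b he
    exact (mem_part_iff_part_eq Λ' a b).1 (hsub a ((mem_part_iff_part_eq Λ a b).2 he))
  set S : Fin r → Finset (Finset (Fin r)) :=
    fun a => Λ.parts.filter (fun t => t ⊆ Λ'.part a) with hSdef
  have hmemS : ∀ a, Λ.part a ∈ S a := fun a =>
    mem_filter.2 ⟨Λ.part_mem.2 (mem_top' a), hsub a⟩
  have hS : ∀ a, idxIn (S a) (Λ.part a) < m := fun a =>
    (idxIn_lt (hmemS a)).trans_le (hm _ (Λ'.part_mem.2 (mem_top' a)))
  have hT : ∀ a, idxIn Λ'.parts (Λ'.part a) < n := fun a =>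
    (idxIn_lt (Λ'.part_mem.2 (mem_top' a))).trans_le hn
  refine ⟨fun a => (⟨idxIn (S a) (Λ.part a), hS a⟩, ⟨idxIn Λ'.parts (Λ'.part a), hT a⟩),
    ?_, ?_⟩
  · have keyf : ∀ a b : Fin r,
        ((⟨idxIn (S a) (Λ.part a), hS a⟩ : Fin m), (⟨idxIn Λ'.parts (Λ'.part a), hT a⟩ : Fin n))
          = (⟨idxIn (S b) (Λ.part b), hS b⟩, ⟨idxIn Λ'.parts (Λ'.part b), hT b⟩)
          ↔ Λ.part a = Λ.part b := by
      intro a b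
      rw [Prod.ext_iff, Fin.mk.injEq, Fin.mk.injEq]
      constructor
      · rintro ⟨h1, h2⟩
        have he' : Λ'.part a = Λ'.part b :=
          (idxIn_inj (Λ'.part_mem.2 (mem_top' a)) (Λ'.part_mem.2 (mem_top' b))).1 h2
        have hSS : S a = S b := by rw [hSdef]; simp only [he']
        rw [hSS] at h1
        exact (idxIn_inj (hSS ▸ hmemS a) (hmemS b)).1 h1
      · intro he
        have he' := hΛ' a b he
        have hSS : S a = S b := by rw [hSdef]; simp only [he']
        constructor
        · rw [hSS, he]
        · rw [he']
    refine finpartition_eq_of_part fun a b => ?_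
    rw [mem_part_kerPart, keyf, mem_part_iff_part_eq]
  · refine finpartition_eq_of_part fun a b => ?_
    rw [mem_part_kerPart]
    simp only [Fin.mk.injEq]
    rw [idxIn_inj (Λ'.part_mem.2 (mem_top' a)) (Λ'.part_mem.2 (mem_top' b)),
      mem_part_iff_part_eq]
end

end Helpers

section Orbit
variable {m n r : ℕ}

lemma smul_apply (x : Wreath m n) (g : Fin r → Fin m × Fin n) (a : Fin r) :
    (x • g) a = (SemidirectProduct.left x (SemidirectProduct.right x (g a).2) (g a).1,
      SemidirectProduct.right x (g a).2) := rfl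

lemma orbit_iff (f g : Fin r → Fin m × Fin n) :
    (∃ x : Wreath m n, x • g = f) ↔
      (kerPart f = kerPart g ∧
        kerPart (fun a => (f a).2) = kerPart (fun a => (g a).2)) := by
  constructor
  · rintro ⟨x, rfl⟩
    constructor
    · rw [kerPart_eq_kerPart]
      intro a b
      rw [smul_apply, smul_apply, Prod.ext_iff, Prod.ext_iff]
      constructor
      · rintro ⟨h1, h2⟩
        have h2' : (g a).2 = (g b).2 := (SemidirectProduct.right x).injective h2
        rw [h2'] at h1
        exact ⟨(SemidirectProduct.left x (SemidirectProduct.right x (g b).2)).injective h1, h2'⟩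
      · rintro ⟨h1, h2⟩
        rw [h1, h2]
        exact ⟨rfl, rfl⟩
    · rw [kerPart_eq_kerPart]
      intro a b
      rw [smul_apply, smul_apply]
      exact (SemidirectProduct.right x).injective.eq_iff.trans Iff.rfl |>.symm |>.symm
  · rintro ⟨h1, h2⟩
    rw [kerPart_eq_kerPart] at h1 h2
    obtain ⟨π, hπ⟩ := exists_perm (fun a => (g a).2) (fun a => (f a).2)
      (fun a b => (h2 a b).symm)
    have hσ : ∀ j : Fin n, ∃ σ : Equiv.Perm (Fin m),
        ∀ a : {a : Fin r // π (g a).2 = j}, σ (g a.1).1 = (f a.1).1 := by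
      intro j
      refine exists_perm (fun a : {a : Fin r // π (g a).2 = j} => (g a.1).1)
        (fun a => (f a.1).1) ?_
      rintro ⟨a, ha⟩ ⟨b, hb⟩
      have hg2 : (g a).2 = (g b).2 := π.injective (ha.trans hb.symm)
      have hf2 : (f a).2 = (f b).2 := (h2 a b).symm.1 hg2
      constructor
      · intro h
        have : g a = g b := Prod.ext h hg2
        exact congrArg Prod.fst ((h1 a b).symm.1 this)
      · intro h
        have : f a = f b := Prod.ext h hf2
        exact congrArg Prod.fst ((h1 a b).1 this)
    choose σ hσ using hσ
    refine ⟨⟨σ, π⟩, funext fun a => ?_⟩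
    rw [smul_apply]
    exact Prod.ext (hσ (π (g a).2) ⟨a, rfl⟩) (hπ a)

end Orbit

/-- The number of `S_m ≀ S_n`-orbits on `r`-tuples equals `|F^r_{m,n}|`. -/
theorem card_orbits_eq_card_Fmn (m n r : ℕ) :
    Nat.card (MulAction.orbitRel.Quotient (Wreath m n) (Fin r → Fin m × Fin n)) =
      Nat.card {p : Finpartition (⊤ : Finset (Fin r)) × Finpartition (⊤ : Finset (Fin r)) //
        Refines p.1 p.2 ∧ p.2.parts.card ≤ n ∧
          ∀ c ∈ p.2.parts, (p.1.parts.filter (fun t => t ⊆ c)).card ≤ m} := by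
  classical
  set Pred := fun p : Finpartition (⊤ : Finset (Fin r)) × Finpartition (⊤ : Finset (Fin r)) =>
    Refines p.1 p.2 ∧ p.2.parts.card ≤ n ∧
      ∀ c ∈ p.2.parts, (p.1.parts.filter (fun t => t ⊆ c)).card ≤ m with hPred
  have hΦc : ∀ f : Fin r → Fin m × Fin n, Pred (kerPart f, kerPart (fun a => (f a).2)) := by
    intro f
    refine ⟨refines_kerPart f, ?_, fun c hc => card_filter_parts_le f hc⟩
    simpa using card_parts_kerPart_le (fun a => (f a).2)
  set Φ : (Fin r → Fin m × Fin n) → {p // Pred p} :=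
    fun f => ⟨(kerPart f, kerPart (fun a => (f a).2)), hΦc f⟩ with hΦ
  have wd : ∀ f g : Fin r → Fin m × Fin n,
      MulAction.orbitRel (Wreath m n) (Fin r → Fin m × Fin n) f g → Φ f = Φ g := by
    intro f g hfg
    rw [MulAction.orbitRel_apply, MulAction.mem_orbit_iff] at hfg
    obtain ⟨h1, h2⟩ := (orbit_iff f g).1 hfg
    exact Subtype.ext (Prod.ext h1 h2)
  refine Nat.card_eq_of_bijective (Quotient.lift Φ wd) ⟨?_, ?_⟩
  · intro q1 q2
    induction q1 using Quotient.inductionOn with | _ f =>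
    induction q2 using Quotient.inductionOn with | _ g =>
    intro h
    have h' := Subtype.ext_iff.1 h
    simp only [Quotient.lift_mk, hΦ, Prod.mk.injEq] at h'
    refine Quotient.sound ?_
    show f ∈ MulAction.orbit (Wreath m n) g
    exact MulAction.mem_orbit_iff.2 ((orbit_iff f g).2 ⟨h'.1, h'.2⟩)
  · rintro ⟨⟨Λ, Λ'⟩, hre, hn', hm'⟩
    obtain ⟨f, hf1, hf2⟩ := exists_realization Λ Λ' hre hn' hm'
    exact ⟨Quotient.mk _ f, Subtype.ext (Prod.ext hf1 hf2)⟩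

end FoulkesWreath
end

section
/- For m even and any n, the plethysm coefficient p_{(m^n),(m^n)}, i.e. the multiplicity of the Specht module S((m^n)) in the permutation module of S_{mn} on cosets of S_m ≀ S_n, equals 1. -/
/-!
Statement 9: for `m` even, the plethysm coefficient `p_{(m^n),(m^n)}`, i.e. the multiplicity
of the Specht module `S((m^n))` in the permutation module of `S_{mn}` on the cosets of the
wreath product subgroup `S_m ≀ S_n`, equals 1.

We construct the Specht module `S(λ)` (for `λ` given as a list of row lengths) as the left
ideal of the group algebra `ℂ[S_N]` generated by the Young symmetrizer of the canonical
tableau of shape `λ`, with `S_N` acting by left multiplication.  The wreath product subgroup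
`S_m ≀ S_n ≤ S_{mn}` is realised as the stabilizer of the set-partition of `{1,…,mn}` into
`n` consecutive blocks of size `m` (i.e. the partition `Λ_{(m^n)}`).  The multiplicity of an
irreducible `V` in `W` is `dim Hom_{S_N}(V, W)`.
-/

open Equiv MonoidAlgebra

namespace FoulkesPlethysm

/-- Row index of cell `k` in the canonical (row-by-row) numbering of the Young diagram with
row lengths `L`. -/
def rowIdx : List ℕ → ℕ → ℕ
  | [], _ => 0
  | a :: t, k => if k < a then 0 else rowIdx t (k - a) + 1

/-- Column index of cell `k` in the canonical numbering of the Young diagram with row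
lengths `L`. -/
def colIdx : List ℕ → ℕ → ℕ
  | [], k => k
  | a :: t, k => if k < a then k else colIdx t (k - a)

/-- The Young symmetrizer of the canonical tableau of shape `L` (a list of row lengths),
inside the group algebra `ℂ[S_N]`: the signed sum over the column group multiplied by the
sum over the row group. -/
noncomputable def youngSym (L : List ℕ) (N : ℕ) : MonoidAlgebra ℂ (Equiv.Perm (Fin N)) :=
  (∑ σ ∈ Finset.univ.filter
      (fun σ : Equiv.Perm (Fin N) => ∀ k : Fin N, colIdx L (σ k) = colIdx L (k : ℕ)),
        ((Equiv.Perm.sign σ : ℤ) : ℂ) • MonoidAlgebra.single σ (1 : ℂ)) *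
  (∑ τ ∈ Finset.univ.filter
      (fun τ : Equiv.Perm (Fin N) => ∀ k : Fin N, rowIdx L (τ k) = rowIdx L (k : ℕ)),
        MonoidAlgebra.single τ (1 : ℂ))

/-- The left ideal `ℂ[S_N]·e_L` generated by the Young symmetrizer. -/
noncomputable def spechtSubmodule (L : List ℕ) (N : ℕ) :
    Submodule ℂ (MonoidAlgebra ℂ (Equiv.Perm (Fin N))) :=
  LinearMap.range (LinearMap.mulRight ℂ (youngSym L N))

lemma ofMulAction_eq_mul {G : Type*} [Group G] (g : G) (x : MonoidAlgebra ℂ G) :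
    (Representation.ofMulAction ℂ G G g) x = MonoidAlgebra.single g 1 * x := by
  induction x using MonoidAlgebra.induction_linear with
  | zero => simp
  | add f₁ f₂ h₁ h₂ => simp only [map_add, mul_add, h₁, h₂]
  | single h a =>
      rw [Representation.ofMulAction_single, MonoidAlgebra.single_mul_single]
      simp [smul_eq_mul]

lemma specht_stable (L : List ℕ) (N : ℕ) (g : Equiv.Perm (Fin N))
    {x : MonoidAlgebra ℂ (Equiv.Perm (Fin N))} (hx : x ∈ spechtSubmodule L N) :
    (Representation.ofMulAction ℂ (Equiv.Perm (Fin N)) (Equiv.Perm (Fin N)) g) x ∈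
      spechtSubmodule L N := by
  obtain ⟨y, rfl⟩ := hx
  exact ⟨MonoidAlgebra.single g 1 * y, by
    simp only [LinearMap.mulRight_apply, ofMulAction_eq_mul, mul_assoc]⟩

/-- The representation of `S_N` on the left ideal generated by the Young symmetrizer,
by left multiplication. -/
noncomputable def spechtRepn (L : List ℕ) (N : ℕ) :
    Representation ℂ (Equiv.Perm (Fin N)) (spechtSubmodule L N) where
  toFun g := LinearMap.restrict _ (fun x hx => specht_stable L N g hx)
  map_one' := by
    refine LinearMap.ext fun x => Subtype.ext ?_
    simp [LinearMap.restrict_apply]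
  map_mul' g h := by
    refine LinearMap.ext fun x => Subtype.ext ?_
    simp [LinearMap.restrict_apply]

/-- The Specht module `S(L)` as a representation of `S_N`, for `L` the list of row lengths
of a partition of `N`. -/
noncomputable def specht (L : List ℕ) (N : ℕ) : Rep ℂ (Equiv.Perm (Fin N)) :=
  Rep.of (spechtRepn L N)

/-- The multiplicity of (an irreducible) `V` in `W`, as `dim_ℂ Hom_G(V, W)`. -/
noncomputable def mult {G : Type} [Group G] (V W : Rep ℂ G) : ℕ :=
  Module.finrank ℂ (V ⟶ W)

/-- The stabilizer of the set-partition `Λ_L` of `{1,…,N}` into consecutive blocks of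
sizes given by `L`: permutations mapping blocks to blocks.  For `L = (m^n)` this is the
wreath product subgroup `S_m ≀ S_n ≤ S_{mn}`. -/
def stabBlocks (L : List ℕ) (N : ℕ) : Subgroup (Equiv.Perm (Fin N)) where
  carrier := {σ | ∀ k l : Fin N,
    rowIdx L (σ k) = rowIdx L (σ l) ↔ rowIdx L (k : ℕ) = rowIdx L (l : ℕ)}
  one_mem' := by intro k l; simp
  mul_mem' := by
    intro a b ha hb k l
    simpa [Equiv.Perm.mul_apply] using (ha (b k) (b l)).trans (hb k l)
  inv_mem' := by
    intro a ha k l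
    simpa using (ha (a⁻¹ k) (a⁻¹ l)).symm


/-! ### Auxiliary lemmas -/

lemma rowIdx_replicate {m : ℕ} (hm : 0 < m) : ∀ (n k : ℕ), k < m * n →
    rowIdx (List.replicate n m) k = k / m := by
  intro n
  induction n with
  | zero => intro k hk; omega
  | succ n ih =>
      intro k hk
      rw [Nat.mul_succ] at hk
      rw [List.replicate_succ, rowIdx]
      by_cases h : k < m
      · rw [if_pos h, Nat.div_eq_of_lt h]
      · rw [if_neg h, ih (k - m) (by omega), eq_comm, Nat.div_eq_sub_div hm (by omega)]

lemma colIdx_replicate {m : ℕ} (hm : 0 < m) : ∀ (n k : ℕ), k < m * n →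
    colIdx (List.replicate n m) k = k % m := by
  intro n
  induction n with
  | zero => intro k hk; omega
  | succ n ih =>
      intro k hk
      rw [Nat.mul_succ] at hk
      rw [List.replicate_succ, colIdx]
      by_cases h : k < m
      · rw [if_pos h, Nat.mod_eq_of_lt h]
      · rw [if_neg h, ih (k - m) (by omega), eq_comm, Nat.mod_eq_sub_mod (by omega)]

lemma m_pos {m n : ℕ} (k : Fin (m * n)) : 0 < m :=
  Nat.pos_of_ne_zero (by rintro rfl; exact absurd k.2 (by simp))

lemma rowIdx_fin {m n : ℕ} (k : Fin (m * n)) :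
    rowIdx (List.replicate n m) k = (k : ℕ) / m :=
  rowIdx_replicate (m_pos k) n k k.2

lemma colIdx_fin {m n : ℕ} (k : Fin (m * n)) :
    colIdx (List.replicate n m) k = (k : ℕ) % m :=
  colIdx_replicate (m_pos k) n k k.2

lemma sign_eq_one {m n : ℕ} (hm : Even m) (σ : Perm (Fin (m * n)))
    (hc : ∀ k : Fin (m * n), ((σ k : ℕ)) % m = (k : ℕ) % m)
    (hr : ∀ k l : Fin (m * n),
      (σ k : ℕ) / m = (σ l : ℕ) / m ↔ (k : ℕ) / m = (l : ℕ) / m) :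
    Perm.sign σ = 1 := by
  rcases Nat.eq_zero_or_pos m with h0 | hmpos
  · have : σ = 1 := by
      ext k
      exact absurd k.2 (by simp [h0])
    simp [this]
  · set cell : Fin n → Fin (m * n) := fun i =>
      ⟨i.val * m, by
        calc i.val * m < n * m := (Nat.mul_lt_mul_right hmpos).mpr i.2
        _ = m * n := Nat.mul_comm n m⟩ with hcell
    set p : Fin n → Fin n := fun i =>
      ⟨(σ (cell i)).val / m, Nat.div_lt_of_lt_mul (σ (cell i)).2⟩ with hp
    have key : ∀ x : Fin (m * n), (σ x).val / m = p ⟨x.val / m, Nat.div_lt_of_lt_mul x.2⟩ := by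
      intro x
      have h1 : (x : ℕ) / m = (cell ⟨x.val / m, Nat.div_lt_of_lt_mul x.2⟩ : ℕ) / m := by
        simp [hcell, Nat.mul_div_cancel _ hmpos]
      exact (hr x _).mpr h1
    have pinj : Function.Injective p := by
      intro i j hij
      have h2 : (σ (cell i) : ℕ) / m = (σ (cell j) : ℕ) / m := congrArg Fin.val hij
      have h3 := (hr _ _).mp h2
      simp [hcell, Nat.mul_div_cancel _ hmpos] at h3
      exact Fin.ext h3
    set π : Perm (Fin n) := Equiv.ofBijective p (Finite.injective_iff_bijective.mp pinj) with hπ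
    set cellEquiv : Fin n × Fin m ≃ Fin (m * n) :=
      { toFun := fun x => ⟨x.1.val * m + x.2.val, by
          calc x.1.val * m + x.2.val < x.1.val * m + m := by omega
          _ = (x.1.val + 1) * m := by ring
          _ ≤ n * m := Nat.mul_le_mul_right m x.1.2
          _ = m * n := Nat.mul_comm n m⟩
        invFun := fun k => (⟨k.val / m, Nat.div_lt_of_lt_mul k.2⟩, ⟨k.val % m, Nat.mod_lt _ hmpos⟩)
        left_inv := by
          rintro ⟨r, c⟩
          have h1 : (r.val * m + c.val) / m = r.val := by
            rw [Nat.mul_comm r.val m, Nat.mul_add_div hmpos, Nat.div_eq_of_lt c.2, Nat.add_zero]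
          have h2 : (r.val * m + c.val) % m = c.val := by
            rw [Nat.mul_comm r.val m, Nat.mul_add_mod, Nat.mod_eq_of_lt c.2]
          simp [h1, h2]
        right_inv := by
          intro k
          exact Fin.ext (Nat.div_add_mod' k.val m) } with hCE
    set g : Perm (Fin n × Fin m) := Equiv.prodCongrLeft (fun _ : Fin m => π) with hg
    have hcompat : ∀ x : Fin (m * n), cellEquiv.symm (σ x) = g (cellEquiv.symm x) := by
      intro x
      have h4 : g (cellEquiv.symm x) =
          (π ⟨x.val / m, Nat.div_lt_of_lt_mul x.2⟩, ⟨x.val % m, Nat.mod_lt _ hmpos⟩) := rfl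
      rw [h4]
      have h5 : cellEquiv.symm (σ x) =
          (⟨(σ x).val / m, Nat.div_lt_of_lt_mul (σ x).2⟩, ⟨(σ x).val % m, Nat.mod_lt _ hmpos⟩) := rfl
      rw [h5]
      refine Prod.ext ?_ ?_
      · exact Fin.ext (key x)
      · exact Fin.ext (hc x)
    have hs : Perm.sign σ = Perm.sign g :=
      Perm.sign_eq_sign_of_equiv σ g cellEquiv.symm hcompat
    rw [hs, hg, Perm.sign_prodCongrLeft]
    rw [Finset.prod_const, Finset.card_univ, Fintype.card_fin]
    rcases Int.units_eq_one_or (Perm.sign π) with h | h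
    · simp [h]
    · simp [h, hm.neg_one_pow]

/-! ### The column and row groups as finsets -/

def Cf (m n : ℕ) : Finset (Perm (Fin (m * n))) :=
  Finset.univ.filter
    (fun σ : Perm (Fin (m * n)) => ∀ k : Fin (m * n),
      colIdx (List.replicate n m) (σ k) = colIdx (List.replicate n m) (k : ℕ))

def Rf (m n : ℕ) : Finset (Perm (Fin (m * n))) :=
  Finset.univ.filter
    (fun τ : Perm (Fin (m * n)) => ∀ k : Fin (m * n),
      rowIdx (List.replicate n m) (τ k) = rowIdx (List.replicate n m) (k : ℕ))

lemma youngSym_eq (m n : ℕ) : youngSym (List.replicate n m) (m * n) =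
    (∑ σ ∈ Cf m n, ((Equiv.Perm.sign σ : ℤ) : ℂ) • MonoidAlgebra.single σ (1 : ℂ)) *
      (∑ τ ∈ Rf m n, MonoidAlgebra.single τ (1 : ℂ)) := rfl

lemma mem_Cf {m n : ℕ} {σ : Perm (Fin (m * n))} :
    σ ∈ Cf m n ↔ ∀ k : Fin (m * n), ((σ k : ℕ)) % m = (k : ℕ) % m := by
  simp only [Cf, Finset.mem_filter, Finset.mem_univ, true_and]
  refine forall_congr' fun k => ?_
  rw [colIdx_fin (σ k), colIdx_fin k]

lemma mem_Rf {m n : ℕ} {τ : Perm (Fin (m * n))} :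
    τ ∈ Rf m n ↔ ∀ k : Fin (m * n), ((τ k : ℕ)) / m = (k : ℕ) / m := by
  simp only [Rf, Finset.mem_filter, Finset.mem_univ, true_and]
  refine forall_congr' fun k => ?_
  rw [rowIdx_fin (τ k), rowIdx_fin k]

lemma one_mem_Cf {m n : ℕ} : (1 : Perm (Fin (m * n))) ∈ Cf m n := by
  rw [mem_Cf]; intro k; rfl

lemma one_mem_Rf {m n : ℕ} : (1 : Perm (Fin (m * n))) ∈ Rf m n := by
  rw [mem_Rf]; intro k; rfl

lemma mul_mem_Cf {m n : ℕ} {σ τ : Perm (Fin (m * n))} (hσ : σ ∈ Cf m n) (hτ : τ ∈ Cf m n) :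
    σ * τ ∈ Cf m n := by
  rw [mem_Cf] at hσ hτ ⊢
  intro k
  rw [Perm.mul_apply, hσ (τ k), hτ k]

lemma inv_mem_Cf {m n : ℕ} {σ : Perm (Fin (m * n))} (hσ : σ ∈ Cf m n) : σ⁻¹ ∈ Cf m n := by
  rw [mem_Cf] at hσ ⊢
  intro k
  have := hσ (σ⁻¹ k)
  rw [← Perm.mul_apply, mul_inv_cancel, Perm.one_apply] at this
  exact this.symm

lemma Rf_mem_stab {m n : ℕ} {τ : Perm (Fin (m * n))} (hτ : τ ∈ Rf m n) :
    τ ∈ stabBlocks (List.replicate n m) (m * n) := by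
  rw [mem_Rf] at hτ
  intro k l
  rw [rowIdx_fin (τ k), rowIdx_fin (τ l), rowIdx_fin k, rowIdx_fin l, hτ k, hτ l]

lemma sgn_sq {α : Type*} [DecidableEq α] [Fintype α] (σ : Perm α) :
    ((Perm.sign σ : ℤ) : ℂ) * ((Perm.sign σ : ℤ) : ℂ) = 1 := by
  rcases Int.units_eq_one_or (Perm.sign σ) with h | h <;> simp [h]

lemma Cf_sum_mul_right {M : Type*} [AddCommMonoid M] {m n : ℕ} {t : Perm (Fin (m * n))}
    (ht : t ∈ Cf m n) (F : Perm (Fin (m * n)) → M) :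
    ∑ σ ∈ Cf m n, F σ = ∑ σ ∈ Cf m n, F (σ * t) :=
  Finset.sum_nbij' (fun σ => σ * t⁻¹) (fun σ => σ * t)
    (fun a ha => mul_mem_Cf ha (inv_mem_Cf ht)) (fun a ha => mul_mem_Cf ha ht)
    (fun a _ => by group) (fun a _ => by group) (fun a _ => by rw [inv_mul_cancel_right])

lemma Cf_sum_mul_left {M : Type*} [AddCommMonoid M] {m n : ℕ} {t : Perm (Fin (m * n))}
    (ht : t ∈ Cf m n) (F : Perm (Fin (m * n)) → M) :
    ∑ σ ∈ Cf m n, F σ = ∑ σ ∈ Cf m n, F (t * σ) :=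
  Finset.sum_nbij' (fun σ => t⁻¹ * σ) (fun σ => t * σ)
    (fun a ha => mul_mem_Cf (inv_mem_Cf ht) ha) (fun a ha => mul_mem_Cf ht ha)
    (fun a _ => by group) (fun a _ => by group) (fun a _ => by rw [mul_inv_cancel_left])

lemma single_mul_youngSym {m n : ℕ} {σ : Perm (Fin (m * n))} (hσ : σ ∈ Cf m n) :
    MonoidAlgebra.single σ (1 : ℂ) * youngSym (List.replicate n m) (m * n) =
      ((Perm.sign σ : ℤ) : ℂ) • youngSym (List.replicate n m) (m * n) := by
  rw [youngSym_eq, ← mul_assoc, ← smul_mul_assoc]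
  congr 1
  rw [Finset.mul_sum, Finset.smul_sum]
  conv_rhs => rw [Cf_sum_mul_left hσ
    (fun x => ((Perm.sign σ : ℤ) : ℂ) • ((Perm.sign x : ℤ) : ℂ) • MonoidAlgebra.single x (1 : ℂ))]
  refine Finset.sum_congr rfl fun i _ => ?_
  have hss : ((Perm.sign σ : ℤ) : ℂ) * ((Perm.sign (σ * i) : ℤ) : ℂ) = ((Perm.sign i : ℤ) : ℂ) := by
    rw [map_mul, Units.val_mul, Int.cast_mul, ← mul_assoc, sgn_sq, one_mul]
  rw [mul_smul_comm, MonoidAlgebra.single_mul_single, one_mul, smul_smul, hss]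

lemma youngSym_expand (m n : ℕ) : youngSym (List.replicate n m) (m * n) =
    ∑ σ ∈ Cf m n, ∑ τ ∈ Rf m n,
      ((Perm.sign σ : ℤ) : ℂ) • MonoidAlgebra.single (σ * τ) (1 : ℂ) := by
  rw [youngSym_eq, Finset.sum_mul]
  refine Finset.sum_congr rfl fun σ _ => ?_
  rw [smul_mul_assoc, Finset.mul_sum, Finset.smul_sum]
  refine Finset.sum_congr rfl fun τ _ => ?_
  rw [MonoidAlgebra.single_mul_single, one_mul]

/-! ### Transpositions and the coset dichotomy -/

lemma swap_mem_Cf {m n : ℕ} {a b : Fin (m * n)} (h : (a : ℕ) % m = (b : ℕ) % m) :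
    Equiv.swap a b ∈ Cf m n := by
  rw [mem_Cf]
  intro k
  rcases eq_or_ne k a with rfl | ha
  · rw [Equiv.swap_apply_left]; exact h.symm
  rcases eq_or_ne k b with rfl | hb
  · rw [Equiv.swap_apply_right]; exact h
  · rw [Equiv.swap_apply_of_ne_of_ne ha hb]

lemma rowIdx_swap_apply {m n : ℕ} {x y : Fin (m * n)} (h : (x : ℕ) / m = (y : ℕ) / m)
    (k : Fin (m * n)) : ((Equiv.swap x y k : Fin (m * n)) : ℕ) / m = (k : ℕ) / m := by
  rcases eq_or_ne k x with rfl | hx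
  · rw [Equiv.swap_apply_left]; exact h.symm
  rcases eq_or_ne k y with rfl | hy
  · rw [Equiv.swap_apply_right]; exact h
  · rw [Equiv.swap_apply_of_ne_of_ne hx hy]

lemma swap_mem_stab {m n : ℕ} {x y : Fin (m * n)} (h : (x : ℕ) / m = (y : ℕ) / m) :
    Equiv.swap x y ∈ stabBlocks (List.replicate n m) (m * n) := by
  intro k l
  rw [rowIdx_fin (Equiv.swap x y k), rowIdx_fin (Equiv.swap x y l), rowIdx_fin k, rowIdx_fin l,
    rowIdx_swap_apply h k, rowIdx_swap_apply h l]

lemma dichotomy {m n : ℕ} (g : Perm (Fin (m * n))) :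
    (∃ a b : Fin (m * n), a ≠ b ∧ (a : ℕ) % m = (b : ℕ) % m ∧
        ((g⁻¹ a : Fin (m * n)) : ℕ) / m = ((g⁻¹ b : Fin (m * n)) : ℕ) / m) ∨
      (∃ σ₀ : Perm (Fin (m * n)), σ₀ ∈ Cf m n ∧
        σ₀ * g ∈ stabBlocks (List.replicate n m) (m * n)) := by
  by_cases hA : ∃ a b : Fin (m * n), a ≠ b ∧ (a : ℕ) % m = (b : ℕ) % m ∧
      ((g⁻¹ a : Fin (m * n)) : ℕ) / m = ((g⁻¹ b : Fin (m * n)) : ℕ) / m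
  · exact Or.inl hA
  push_neg at hA
  right
  set f : Fin (m * n) → Fin (m * n) := fun x =>
    ⟨(x : ℕ) % m + ((g⁻¹ x : Fin (m * n)) : ℕ) / m * m, by
      have hm0 : 0 < m := m_pos x
      have h1 : ((g⁻¹ x : Fin (m * n)) : ℕ) / m < n := Nat.div_lt_of_lt_mul (g⁻¹ x).2
      have h2 : (x : ℕ) % m < m := Nat.mod_lt _ hm0
      calc (x : ℕ) % m + ((g⁻¹ x : Fin (m * n)) : ℕ) / m * m
          < m + ((g⁻¹ x : Fin (m * n)) : ℕ) / m * m := by omega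
        _ = (((g⁻¹ x : Fin (m * n)) : ℕ) / m + 1) * m := by ring
        _ ≤ n * m := Nat.mul_le_mul_right m h1
        _ = m * n := Nat.mul_comm n m⟩ with hf
  have hfc : ∀ x : Fin (m * n), ((f x : Fin (m * n)) : ℕ) % m = (x : ℕ) % m := by
    intro x
    have hm0 : 0 < m := m_pos x
    show ((x : ℕ) % m + ((g⁻¹ x : Fin (m * n)) : ℕ) / m * m) % m = (x : ℕ) % m
    rw [Nat.add_mul_mod_self_right, Nat.mod_eq_of_lt (Nat.mod_lt _ hm0)]
  have hfr : ∀ x : Fin (m * n), ((f x : Fin (m * n)) : ℕ) / m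
      = ((g⁻¹ x : Fin (m * n)) : ℕ) / m := by
    intro x
    have hm0 : 0 < m := m_pos x
    show ((x : ℕ) % m + ((g⁻¹ x : Fin (m * n)) : ℕ) / m * m) / m
      = ((g⁻¹ x : Fin (m * n)) : ℕ) / m
    rw [Nat.add_mul_div_right _ _ hm0, Nat.div_eq_of_lt (Nat.mod_lt _ hm0), Nat.zero_add]
  have hinj : Function.Injective f := by
    intro x y hxy
    have hm0 : 0 < m := m_pos x
    have hc' : (x : ℕ) % m = (y : ℕ) % m := by rw [← hfc x, ← hfc y, hxy]
    have hr' : ((g⁻¹ x : Fin (m * n)) : ℕ) / m = ((g⁻¹ y : Fin (m * n)) : ℕ) / m := by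
      rw [← hfr x, ← hfr y, hxy]
    by_contra hne
    exact hA x y hne hc' hr'
  set σ₀ : Perm (Fin (m * n)) :=
    Equiv.ofBijective f (Finite.injective_iff_bijective.mp hinj) with hσ₀
  have hσ₀app : ∀ x, σ₀ x = f x := fun x => rfl
  refine ⟨σ₀, ?_, ?_⟩
  · rw [mem_Cf]
    intro k
    rw [hσ₀app]
    exact hfc k
  · intro k l
    have hk : ((σ₀ (g k) : Fin (m * n)) : ℕ) / m = (k : ℕ) / m := by
      rw [hσ₀app, hfr (g k), ← Perm.mul_apply, inv_mul_cancel, Perm.one_apply]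
    have hl : ((σ₀ (g l) : Fin (m * n)) : ℕ) / m = (l : ℕ) / m := by
      rw [hσ₀app, hfr (g l), ← Perm.mul_apply, inv_mul_cancel, Perm.one_apply]
    rw [rowIdx_fin, rowIdx_fin, rowIdx_fin k, rowIdx_fin l]
    show ((σ₀ (g k) : Fin (m * n)) : ℕ) / m = ((σ₀ (g l) : Fin (m * n)) : ℕ) / m
      ↔ (k : ℕ) / m = (l : ℕ) / m
    rw [hk, hl]

/-! ### The signed column sum operator on the permutation module -/

noncomputable def Theta (m n : ℕ) :
    (MonoidAlgebra ℂ (Perm (Fin (m * n)) ⧸ stabBlocks (List.replicate n m) (m * n))) →ₗ[ℂ]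
      (MonoidAlgebra ℂ (Perm (Fin (m * n)) ⧸ stabBlocks (List.replicate n m) (m * n))) :=
  ∑ σ ∈ Cf m n, ((Equiv.Perm.sign σ : ℤ) : ℂ) •
    (Representation.ofMulAction ℂ (Perm (Fin (m * n)))
      (Perm (Fin (m * n)) ⧸ stabBlocks (List.replicate n m) (m * n)) σ)

lemma Theta_single (m n : ℕ) (g : Perm (Fin (m * n))) :
    Theta m n (MonoidAlgebra.single (QuotientGroup.mk g) 1) =
      ∑ σ ∈ Cf m n, ((Equiv.Perm.sign σ : ℤ) : ℂ) •
        MonoidAlgebra.single (QuotientGroup.mk (σ * g)) (1 : ℂ) := by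
  rw [Theta, LinearMap.sum_apply]
  refine Finset.sum_congr rfl fun σ _ => ?_
  rw [LinearMap.smul_apply, Representation.ofMulAction_single]
  rfl

noncomputable def w0 (m n : ℕ) :
    MonoidAlgebra ℂ (Perm (Fin (m * n)) ⧸ stabBlocks (List.replicate n m) (m * n)) :=
  Theta m n (MonoidAlgebra.single (QuotientGroup.mk 1) 1)

lemma Theta_single_mem_span (m n : ℕ) (g : Perm (Fin (m * n))) :
    Theta m n (MonoidAlgebra.single (QuotientGroup.mk g) 1) ∈ Submodule.span ℂ {w0 m n} := by
  rcases dichotomy g with ⟨a, b, hab, hcol, hrow⟩ | ⟨σ₀, hσ₀C, hσ₀H⟩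
  · -- the coset is annihilated
    set t : Perm (Fin (m * n)) := Equiv.swap a b with ht
    have htC : t ∈ Cf m n := swap_mem_Cf hcol
    have htg : ∀ σ : Perm (Fin (m * n)),
        (QuotientGroup.mk (σ * t * g) :
          Perm (Fin (m * n)) ⧸ stabBlocks (List.replicate n m) (m * n)) =
          QuotientGroup.mk (σ * g) := by
      intro σ
      rw [QuotientGroup.eq]
      have ht2 : t⁻¹ = t := by rw [ht]; exact Equiv.swap_inv a b
      have h1 : (σ * t * g)⁻¹ * (σ * g) = g⁻¹ * t⁻¹ * g := by group
      rw [h1, ht2]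
      have h2 : g⁻¹ * t * g = Equiv.swap (g⁻¹ a) (g⁻¹ b) := by
        rw [ht, Equiv.swap_apply_apply g⁻¹ a b]
        group
      rw [h2]
      exact swap_mem_stab hrow
    have hzero : Theta m n (MonoidAlgebra.single (QuotientGroup.mk g) 1) =
        -Theta m n (MonoidAlgebra.single (QuotientGroup.mk g) 1) := by
      conv_lhs => rw [Theta_single, Cf_sum_mul_right htC
        (fun σ => ((Equiv.Perm.sign σ : ℤ) : ℂ) •
          MonoidAlgebra.single (QuotientGroup.mk (σ * g)) (1 : ℂ))]
      rw [Theta_single, ← Finset.sum_neg_distrib]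
      refine Finset.sum_congr rfl fun σ _ => ?_
      rw [htg σ, ← neg_smul]
      congr 1
      rw [map_mul]
      have hst : Perm.sign t = -1 := Equiv.Perm.sign_swap hab
      rw [hst]
      push_cast
      ring
    have : Theta m n (MonoidAlgebra.single (QuotientGroup.mk g) 1) = 0 := by
      have h2 : (2 : ℂ) • Theta m n (MonoidAlgebra.single (QuotientGroup.mk g) 1) = 0 := by
        rw [two_smul]
        nth_rewrite 2 [hzero]
        simp
      rcases smul_eq_zero.mp h2 with h3 | h3
      · exact absurd h3 two_ne_zero
      · exact h3
    rw [this]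
    exact Submodule.zero_mem _
  · -- the coset is a multiple of the base coset
    have hkey : Theta m n (MonoidAlgebra.single (QuotientGroup.mk g) 1) =
        ((Equiv.Perm.sign σ₀ : ℤ) : ℂ) • w0 m n := by
      rw [w0, Theta_single, Theta_single, Finset.smul_sum]
      rw [Cf_sum_mul_right hσ₀C
        (fun σ => ((Equiv.Perm.sign σ : ℤ) : ℂ) •
          MonoidAlgebra.single (QuotientGroup.mk (σ * g)) (1 : ℂ))]
      refine Finset.sum_congr rfl fun σ _ => ?_
      have hq : (QuotientGroup.mk (σ * σ₀ * g) :
          Perm (Fin (m * n)) ⧸ stabBlocks (List.replicate n m) (m * n)) =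
          QuotientGroup.mk (σ * 1) := by
        rw [QuotientGroup.eq]
        have h5 : (σ * σ₀ * g)⁻¹ * (σ * 1) = (σ₀ * g)⁻¹ := by group
        rw [h5]
        exact inv_mem hσ₀H
      rw [hq, smul_smul]
      congr 1
      rw [map_mul, Units.val_mul, Int.cast_mul]
      ring
    rw [hkey]
    exact Submodule.smul_mem _ _ (Submodule.mem_span_singleton_self _)

lemma Theta_mem_span (m n : ℕ)
    (x : MonoidAlgebra ℂ (Perm (Fin (m * n)) ⧸ stabBlocks (List.replicate n m) (m * n))) :
    Theta m n x ∈ Submodule.span ℂ {w0 m n} := by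
  induction x using MonoidAlgebra.induction_linear with
  | zero => rw [map_zero]; exact Submodule.zero_mem _
  | add f g hf hg => rw [map_add]; exact Submodule.add_mem _ hf hg
  | single q c =>
      induction q using QuotientGroup.induction_on with
      | H g =>
          have h1 : MonoidAlgebra.single (QuotientGroup.mk g :
              Perm (Fin (m * n)) ⧸ stabBlocks (List.replicate n m) (m * n)) c =
              c • MonoidAlgebra.single (QuotientGroup.mk g) 1 := by
            rw [MonoidAlgebra.smul_single', mul_one]
          rw [h1, map_smul]
          exact Submodule.smul_mem _ _ (Theta_single_mem_span m n g)

/-! ### Coefficient computations -/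

lemma quot_eq_one_iff {m n : ℕ} (σ : Perm (Fin (m * n))) :
    (QuotientGroup.mk σ :
        Perm (Fin (m * n)) ⧸ stabBlocks (List.replicate n m) (m * n)) = QuotientGroup.mk 1 ↔
      σ ∈ stabBlocks (List.replicate n m) (m * n) := by
  rw [QuotientGroup.eq, mul_one, inv_mem_iff]

lemma sign_one_of_mem {m n : ℕ} (hme : Even m) {σ : Perm (Fin (m * n))} (hC : σ ∈ Cf m n)
    (hH : σ ∈ stabBlocks (List.replicate n m) (m * n)) :
    ((Equiv.Perm.sign σ : ℤ) : ℂ) = 1 := by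
  have hc := mem_Cf.mp hC
  have hr : ∀ k l : Fin (m * n),
      (σ k : ℕ) / m = (σ l : ℕ) / m ↔ (k : ℕ) / m = (l : ℕ) / m := by
    intro k l
    have := hH k l
    rwa [rowIdx_fin (σ k), rowIdx_fin (σ l), rowIdx_fin k, rowIdx_fin l] at this
  rw [sign_eq_one hme σ hc hr]
  norm_num

open scoped Classical in
/-- The number of column permutations stabilizing the row blocks. -/
noncomputable def Kcard (m n : ℕ) : ℕ :=
  ((Cf m n).filter (fun σ => σ ∈ stabBlocks (List.replicate n m) (m * n))).card

lemma Kcard_pos (m n : ℕ) : 0 < Kcard m n := by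
  classical
  rw [Kcard, Finset.card_pos]
  exact ⟨1, Finset.mem_filter.mpr ⟨one_mem_Cf, one_mem _⟩⟩

lemma w0_apply {m n : ℕ} (hme : Even m) :
    (w0 m n).coeff (QuotientGroup.mk 1) = (Kcard m n : ℂ) := by
  classical
  rw [w0, Theta_single, MonoidAlgebra.coeff_sum, Finsupp.finset_sum_apply]
  have hterm : ∀ σ ∈ Cf m n,
      (((Equiv.Perm.sign σ : ℤ) : ℂ) •
        MonoidAlgebra.single (QuotientGroup.mk (σ * 1) :
          Perm (Fin (m * n)) ⧸ stabBlocks (List.replicate n m) (m * n)) (1 : ℂ)).coeff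
        (QuotientGroup.mk 1) =
      if σ ∈ stabBlocks (List.replicate n m) (m * n) then (1 : ℂ) else 0 := by
    intro σ hσ
    rw [MonoidAlgebra.coeff_smul, Finsupp.smul_apply, mul_one, MonoidAlgebra.coeff_single]
    by_cases hH : σ ∈ stabBlocks (List.replicate n m) (m * n)
    · rw [if_pos hH, (quot_eq_one_iff σ).mpr hH, Finsupp.single_eq_same, smul_eq_mul, mul_one,
        sign_one_of_mem hme hσ hH]
    · rw [if_neg hH, Finsupp.single_eq_of_ne, smul_eq_mul, mul_zero]
      intro hcontra
      exact hH ((quot_eq_one_iff σ).mp hcontra.symm)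
  rw [Finset.sum_congr rfl hterm, Finset.sum_boole]
  rw [Kcard]

lemma youngSym_coeff {m n : ℕ} (hme : Even m) :
    ((Representation.asAlgebraHom
        (Representation.ofMulAction ℂ (Perm (Fin (m * n)))
          (Perm (Fin (m * n)) ⧸ stabBlocks (List.replicate n m) (m * n)))
        (youngSym (List.replicate n m) (m * n)))
      (MonoidAlgebra.single (QuotientGroup.mk 1) 1)).coeff (QuotientGroup.mk 1) =
      ((Rf m n).card : ℂ) * (Kcard m n : ℂ) := by
  classical
  rw [youngSym_expand, map_sum, LinearMap.sum_apply, MonoidAlgebra.coeff_sum, Finsupp.finset_sum_apply]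
  have hterm : ∀ σ ∈ Cf m n,
      ((Representation.asAlgebraHom
          (Representation.ofMulAction ℂ (Perm (Fin (m * n)))
            (Perm (Fin (m * n)) ⧸ stabBlocks (List.replicate n m) (m * n)))
          (∑ τ ∈ Rf m n, ((Equiv.Perm.sign σ : ℤ) : ℂ) •
            MonoidAlgebra.single (σ * τ) (1 : ℂ)))
        (MonoidAlgebra.single (QuotientGroup.mk 1) 1)).coeff (QuotientGroup.mk 1) =
      if σ ∈ stabBlocks (List.replicate n m) (m * n) then ((Rf m n).card : ℂ) else 0 := by
    intro σ hσ
    rw [map_sum, LinearMap.sum_apply, MonoidAlgebra.coeff_sum, Finsupp.finset_sum_apply]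
    have hterm2 : ∀ τ ∈ Rf m n,
        ((Representation.asAlgebraHom
            (Representation.ofMulAction ℂ (Perm (Fin (m * n)))
              (Perm (Fin (m * n)) ⧸ stabBlocks (List.replicate n m) (m * n)))
            (((Equiv.Perm.sign σ : ℤ) : ℂ) • MonoidAlgebra.single (σ * τ) (1 : ℂ)))
          (MonoidAlgebra.single (QuotientGroup.mk 1) 1)).coeff (QuotientGroup.mk 1) =
        if σ ∈ stabBlocks (List.replicate n m) (m * n) then (1 : ℂ) else 0 := by
      intro τ hτ
      rw [map_smul, LinearMap.smul_apply, MonoidAlgebra.coeff_smul, Finsupp.smul_apply,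
        Representation.asAlgebraHom_single, one_smul, Representation.ofMulAction_single]
      have hq : ((σ * τ) • (QuotientGroup.mk 1) :
          Perm (Fin (m * n)) ⧸ stabBlocks (List.replicate n m) (m * n)) =
          QuotientGroup.mk (σ * τ) := by
        show QuotientGroup.mk ((σ * τ) * 1) = QuotientGroup.mk (σ * τ)
        rw [mul_one]
      rw [hq, MonoidAlgebra.coeff_single]
      have hiff : (QuotientGroup.mk (σ * τ) :
          Perm (Fin (m * n)) ⧸ stabBlocks (List.replicate n m) (m * n)) = QuotientGroup.mk 1 ↔
          σ ∈ stabBlocks (List.replicate n m) (m * n) := by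
        rw [quot_eq_one_iff (σ * τ)]
        exact mul_mem_cancel_right (Rf_mem_stab hτ)
      by_cases hH : σ ∈ stabBlocks (List.replicate n m) (m * n)
      · rw [if_pos hH, hiff.mpr hH, Finsupp.single_eq_same, smul_eq_mul, mul_one,
          sign_one_of_mem hme hσ hH]
      · rw [if_neg hH, Finsupp.single_eq_of_ne, smul_eq_mul, mul_zero]
        intro hcontra
        exact hH (hiff.mp hcontra.symm)
    rw [Finset.sum_congr rfl hterm2]
    by_cases hH : σ ∈ stabBlocks (List.replicate n m) (m * n)
    · rw [if_pos hH]
      simp [hH]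
    · rw [if_neg hH]
      simp [hH]
  rw [Finset.sum_congr rfl hterm]
  rw [Finset.sum_ite, Finset.sum_const, Finset.sum_const, smul_zero, add_zero,
    nsmul_eq_mul, Kcard]
  ring

/-! ### The canonical generator and explicit homomorphism -/

noncomputable def eElt (m n : ℕ) : spechtSubmodule (List.replicate n m) (m * n) :=
  ⟨youngSym (List.replicate n m) (m * n), ⟨1, one_mul _⟩⟩

lemma specht_rho_eElt {m n : ℕ} {σ : Perm (Fin (m * n))} (hσ : σ ∈ Cf m n) :
    (spechtRepn (List.replicate n m) (m * n)) σ (eElt m n) =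
      ((Equiv.Perm.sign σ : ℤ) : ℂ) • eElt m n := by
  refine Subtype.ext ?_
  show ((Representation.ofMulAction ℂ (Perm (Fin (m * n))) (Perm (Fin (m * n)))) σ)
      (eElt m n).1 = _
  rw [ofMulAction_eq_mul]
  show MonoidAlgebra.single σ 1 * youngSym (List.replicate n m) (m * n) = _
  rw [single_mul_youngSym hσ]
  rfl

noncomputable def ell (m n : ℕ) :
    spechtSubmodule (List.replicate n m) (m * n) →ₗ[ℂ]
      (MonoidAlgebra ℂ (Perm (Fin (m * n)) ⧸ stabBlocks (List.replicate n m) (m * n))) where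
  toFun v :=
    (Representation.asAlgebraHom
      (Representation.ofMulAction ℂ (Perm (Fin (m * n)))
        (Perm (Fin (m * n)) ⧸ stabBlocks (List.replicate n m) (m * n))) v.1)
      (MonoidAlgebra.single (QuotientGroup.mk 1) 1)
  map_add' v w := by
    rw [Submodule.coe_add, map_add, LinearMap.add_apply]
  map_smul' c v := by
    rw [Submodule.coe_smul, map_smul, LinearMap.smul_apply, RingHom.id_apply]

noncomputable def phi0 (m n : ℕ) :
    specht (List.replicate n m) (m * n) ⟶
      Rep.ofMulAction ℂ (Equiv.Perm (Fin (m * n)))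
        (Equiv.Perm (Fin (m * n)) ⧸ stabBlocks (List.replicate n m) (m * n)) :=
  Rep.ofHom ((ell m n).intertwiningMap_of_isIntertwiningMap _ _ fun g v => by
    show ell m n ((spechtRepn (List.replicate n m) (m * n)) g v) =
      (Representation.ofMulAction ℂ (Perm (Fin (m * n)))
        (Perm (Fin (m * n)) ⧸ stabBlocks (List.replicate n m) (m * n))) g (ell m n v)
    have h1 : (((spechtRepn (List.replicate n m) (m * n)) g v) :
        MonoidAlgebra ℂ (Perm (Fin (m * n)))) = MonoidAlgebra.single g 1 * v.1 := by
      show ((Representation.ofMulAction ℂ (Perm (Fin (m * n))) (Perm (Fin (m * n)))) g) v.1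
        = _
      rw [ofMulAction_eq_mul]
    show (Representation.asAlgebraHom _ (((spechtRepn (List.replicate n m) (m * n)) g v) :
        MonoidAlgebra ℂ (Perm (Fin (m * n)))))
      (MonoidAlgebra.single (QuotientGroup.mk 1) 1) = _
    rw [h1, map_mul, Module.End.mul_apply, Representation.asAlgebraHom_single, one_smul]
    rfl)

lemma spechtRepn_val (m n : ℕ) (g : Perm (Fin (m * n))) :
    (((spechtRepn (List.replicate n m) (m * n)) g) (eElt m n) :
      MonoidAlgebra ℂ (Perm (Fin (m * n)))) =
      MonoidAlgebra.single g 1 * youngSym (List.replicate n m) (m * n) := by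
  show ((Representation.ofMulAction ℂ (Perm (Fin (m * n))) (Perm (Fin (m * n)))) g)
    (eElt m n).1 = _
  rw [ofMulAction_eq_mul]
  rfl

/-- For `m` even, the multiplicity of the Specht module `S((m^n))` in the
permutation module of `S_{mn}` on the cosets of `S_m ≀ S_n` is `1`. -/
theorem plethysm_rect_even (m n : ℕ) (hm : Even m) :
    mult (specht (List.replicate n m) (m * n))
      (Rep.ofMulAction ℂ (Equiv.Perm (Fin (m * n)))
        (Equiv.Perm (Fin (m * n)) ⧸ stabBlocks (List.replicate n m) (m * n))) = 1 := by
  classical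
  have hK : ((Kcard m n : ℂ)) ≠ 0 := Nat.cast_ne_zero.mpr (Kcard_pos m n).ne'
  have hRcard : (((Rf m n).card : ℕ) : ℂ) ≠ 0 :=
    Nat.cast_ne_zero.mpr (Finset.card_pos.mpr ⟨1, one_mem_Rf⟩).ne'
  have hCcard : (((Cf m n).card : ℕ) : ℂ) ≠ 0 :=
    Nat.cast_ne_zero.mpr (Finset.card_pos.mpr ⟨1, one_mem_Cf⟩).ne'
  -- evaluation of a hom at the Young symmetrizer
  let ev : (specht (List.replicate n m) (m * n) ⟶
      Rep.ofMulAction ℂ (Equiv.Perm (Fin (m * n)))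
        (Equiv.Perm (Fin (m * n)) ⧸ stabBlocks (List.replicate n m) (m * n))) →
      (MonoidAlgebra ℂ (Perm (Fin (m * n)) ⧸ stabBlocks (List.replicate n m) (m * n))) :=
    fun φ => φ.hom (eElt m n)
  let Ψ : (specht (List.replicate n m) (m * n) ⟶
      Rep.ofMulAction ℂ (Equiv.Perm (Fin (m * n)))
        (Equiv.Perm (Fin (m * n)) ⧸ stabBlocks (List.replicate n m) (m * n))) →ₗ[ℂ] ℂ :=
    { toFun := fun φ => (ev φ).coeff (QuotientGroup.mk 1)
      map_add' := fun φ ψ => by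
        have h : ev (φ + ψ) = ev φ + ev ψ := rfl
        rw [h, MonoidAlgebra.coeff_add, Finsupp.add_apply]
      map_smul' := fun c φ => by
        have h : ev (c • φ) = c • ev φ := rfl
        rw [h, MonoidAlgebra.coeff_smul, Finsupp.smul_apply, RingHom.id_apply, smul_eq_mul] }
  -- value on the explicit homomorphism
  have hΨφ₀ : Ψ (phi0 m n) = ((Rf m n).card : ℂ) * (Kcard m n : ℂ) := youngSym_coeff hm
  -- injectivity
  have hker : ∀ φ, Ψ φ = 0 → φ = 0 := by
    intro φ hφ
    have hcom : ∀ σ ∈ Cf m n,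
        (Representation.ofMulAction ℂ (Perm (Fin (m * n)))
          (Perm (Fin (m * n)) ⧸ stabBlocks (List.replicate n m) (m * n))) σ (ev φ) =
        ((Equiv.Perm.sign σ : ℤ) : ℂ) • ev φ := by
      intro σ hσ
      have h1 := Rep.hom_comm_apply φ σ (eElt m n)
      have h2 : ((specht (List.replicate n m) (m * n)).ρ σ) (eElt m n) =
          ((Equiv.Perm.sign σ : ℤ) : ℂ) • eElt m n := specht_rho_eElt hσ
      rw [h2] at h1
      exact h1.symm.trans (map_smul φ.hom _ _)
    have hTheta : Theta m n (ev φ) = (((Cf m n).card : ℕ) : ℂ) • ev φ := by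
      rw [Theta, LinearMap.sum_apply]
      have h3 : ∀ σ ∈ Cf m n,
          ((((Equiv.Perm.sign σ : ℤ) : ℂ) •
            (Representation.ofMulAction ℂ (Perm (Fin (m * n)))
              (Perm (Fin (m * n)) ⧸ stabBlocks (List.replicate n m) (m * n))) σ)) (ev φ)
            = ev φ := by
        intro σ hσ
        rw [LinearMap.smul_apply, hcom σ hσ, smul_smul, sgn_sq, one_smul]
      rw [Finset.sum_congr rfl h3, Finset.sum_const, Nat.cast_smul_eq_nsmul]
    have hxspan : ev φ ∈ Submodule.span ℂ {w0 m n} := by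
      have h4 : ev φ = (((Cf m n).card : ℕ) : ℂ)⁻¹ • Theta m n (ev φ) := by
        rw [hTheta, smul_smul, inv_mul_cancel₀ hCcard, one_smul]
      rw [h4]
      exact Submodule.smul_mem _ _ (Theta_mem_span m n (ev φ))
    obtain ⟨a, ha⟩ := Submodule.mem_span_singleton.mp hxspan
    have h5 : (ev φ).coeff (QuotientGroup.mk 1) = a * (Kcard m n : ℂ) := by
      rw [← ha, MonoidAlgebra.coeff_smul, Finsupp.smul_apply, w0_apply hm, smul_eq_mul]
    have h6 : a = 0 := by
      have h7 : a * (Kcard m n : ℂ) = 0 := by rw [← h5]; exact hφ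
      rcases mul_eq_zero.mp h7 with h | h
      · exact h
      · exact absurd h hK
    have hx0 : ev φ = 0 := by rw [← ha, h6, zero_smul]
    -- conclude that φ vanishes
    let cr : MonoidAlgebra ℂ (Perm (Fin (m * n))) →ₗ[ℂ]
        spechtSubmodule (List.replicate n m) (m * n) :=
      LinearMap.codRestrict _ (LinearMap.mulRight ℂ (youngSym (List.replicate n m) (m * n)))
        (fun y => ⟨y, rfl⟩)
    let φh : spechtSubmodule (List.replicate n m) (m * n) →ₗ[ℂ]
        (MonoidAlgebra ℂ (Perm (Fin (m * n)) ⧸ stabBlocks (List.replicate n m) (m * n))) := φ.hom.toLinearMap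
    have hξ0 : ∀ y, φh (cr y) = 0 := by
      intro y
      induction y using MonoidAlgebra.induction_linear with
      | zero => rw [map_zero, map_zero]
      | add f g hf hg => rw [map_add, map_add, hf, hg, add_zero]
      | single g c =>
          have h8 : cr (MonoidAlgebra.single g c) =
              c • ((spechtRepn (List.replicate n m) (m * n)) g (eElt m n)) := by
            refine Subtype.ext ?_
            rw [Submodule.coe_smul, spechtRepn_val]
            show MonoidAlgebra.single g c * youngSym (List.replicate n m) (m * n) = _
            have h9 : c • MonoidAlgebra.single g (1 : ℂ) = MonoidAlgebra.single g c := by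
              rw [MonoidAlgebra.smul_single', mul_one]
            rw [← h9, smul_mul_assoc]
          rw [h8, map_smul]
          have h10 : φh ((spechtRepn (List.replicate n m) (m * n)) g (eElt m n)) =
              (Representation.ofMulAction ℂ (Perm (Fin (m * n)))
                (Perm (Fin (m * n)) ⧸ stabBlocks (List.replicate n m) (m * n))) g (ev φ) :=
            Rep.hom_comm_apply φ g (eElt m n)
          rw [h10, hx0, map_zero, smul_zero]
    have hhom : φ.hom = 0 := by
      refine Representation.IntertwiningMap.ext (LinearMap.ext fun v => ?_)
      obtain ⟨y, hy⟩ := v.2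
      have hv : cr y = v := Subtype.ext hy
      show φh v = 0
      rw [← hv]
      exact hξ0 y
    exact Rep.hom_ext hhom
  have hinj : Function.Injective Ψ := by
    intro φ ψ h
    have h1 : Ψ (φ - ψ) = 0 := by rw [map_sub, h, sub_self]
    have h2 := hker _ h1
    exact sub_eq_zero.mp h2
  have hsurj : Function.Surjective Ψ := by
    intro z
    refine ⟨(z / (((Rf m n).card : ℂ) * (Kcard m n : ℂ))) • phi0 m n, ?_⟩
    rw [map_smul, hΨφ₀, smul_eq_mul, div_mul_cancel₀]
    exact mul_ne_zero hRcard hK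
  have equiv : (specht (List.replicate n m) (m * n) ⟶
      Rep.ofMulAction ℂ (Equiv.Perm (Fin (m * n)))
        (Equiv.Perm (Fin (m * n)) ⧸ stabBlocks (List.replicate n m) (m * n))) ≃ₗ[ℂ] ℂ :=
    LinearEquiv.ofBijective Ψ ⟨hinj, hsurj⟩
  exact (LinearEquiv.finrank_eq equiv).trans (Module.finrank_self ℂ)
end FoulkesPlethysm
end
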